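/- arXiv:0706.1419 — 3 statements merged into one kernel-verified Lean document; each statement's English description precedes it below -/
import Mathlib

section
/- Let λ ∈ (0,1) and let μ be a symmetric Borel probability measure on ℝ. Then lim_{x→−∞} H_μ(x) = −(1−λ)·∫ t^{−2} dμ(t) in [−∞, 0) (with the convention 1/0 = +∞, so the limit is −∞ whenever ∫ t^{−2} dμ(t) = +∞, in particular whenever μ({0}) > 0), and lim_{x→−∞} H_μ(x)/x = λ·μ({0})² + (1−λ)·μ({0}). -/
open MeasureTheory Complex Set Filter Topology

noncomputable section

/-- `M_μ(z) = ∫ z t² / (1 - z t²) dμ(t)`. -/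
def Mt (μ : Measure ℝ) (z : ℂ) : ℂ := ∫ t : ℝ, z * (t : ℂ) ^ 2 / (1 - z * (t : ℂ) ^ 2) ∂μ

/-- `H_μ(z) = z (1 + M_μ(z)) (1 + λ M_μ(z))`. -/
def Ht (l : ℝ) (μ : Measure ℝ) (z : ℂ) : ℂ :=
  z * (1 + Mt μ z) * (1 + (l : ℂ) * Mt μ z)

/-- `∫ t⁻² dμ(t)` with the convention `1/0 = +∞`, computed in `ℝ≥0∞`. -/
def invSqInt (μ : Measure ℝ) : ENNReal := ∫⁻ t : ℝ, (ENNReal.ofReal (t ^ 2))⁻¹ ∂μ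

/-!
On the negative axis everything is real: for `x ≤ 0`, `1 + M_μ(x) = ∫ (1 - x t²)⁻¹ dμ(t)`, which
tends to `μ({0})` by dominated convergence, while `-x (1 + M_μ(x)) = ∫ s / (1 + s t²) dμ(t)` with
`s = -x` increases to `∫ t⁻² dμ(t)` by monotone convergence. Both limits of `H_μ` follow from
`H_μ(x) = x (1 + M_μ(x)) (1 + λ M_μ(x))` and `1 + λ M_μ(x) → 1 - λ (1 - μ({0})) > 0`.
-/

open scoped ENNReal

theorem tendsto_lintegral_of_monotone_of_tendsto {α : Type*} [MeasurableSpace α] {μ : Measure α}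
    {f : ℝ → α → ℝ≥0∞} {g : α → ℝ≥0∞} (hf : ∀ s, AEMeasurable (f s) μ)
    (h_mono : ∀ᵐ a ∂μ, Monotone fun s => f s a)
    (h_tendsto : ∀ᵐ a ∂μ, Tendsto (fun s => f s a) atTop (𝓝 (g a))) :
    Tendsto (fun s => ∫⁻ a, f s a ∂μ) atTop (𝓝 (∫⁻ a, g a ∂μ)) := by
  have h_sup := tendsto_atTop_iSup fun s s' hss' =>
    lintegral_mono_ae (h_mono.mono fun a ha => ha hss')
  have h_nat := lintegral_tendsto_of_tendsto_of_monotone (fun n : ℕ => hf n)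
    (h_mono.mono fun a ha => Monotone.comp ha Nat.mono_cast)
    (h_tendsto.mono fun a ha => ha.comp tendsto_natCast_atTop_atTop)
  rwa [tendsto_nhds_unique (h_sup.comp tendsto_natCast_atTop_atTop) h_nat] at h_sup

theorem norm_inv_one_sub_mul_sq_le_one {x : ℝ} (hx : x ≤ 0) (t : ℝ) :
    ‖(1 - x * t ^ 2)⁻¹‖ ≤ 1 := by
  have : 1 ≤ 1 - x * t ^ 2 := by nlinarith [sq_nonneg t]
  rw [norm_inv, Real.norm_of_nonneg (by linarith)]
  exact inv_le_one_of_one_le₀ this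

theorem measurable_inv_one_sub_mul_sq (x : ℝ) : Measurable fun t : ℝ => (1 - x * t ^ 2)⁻¹ := by
  fun_prop

theorem integrable_inv_one_sub_mul_sq (μ : Measure ℝ) [IsFiniteMeasure μ] {x : ℝ} (hx : x ≤ 0) :
    Integrable (fun t => (1 - x * t ^ 2)⁻¹) μ :=
  (integrable_const 1).mono' (measurable_inv_one_sub_mul_sq x).aestronglyMeasurable
    (ae_of_all _ (norm_inv_one_sub_mul_sq_le_one hx))

def sqResolvent (μ : Measure ℝ) (x : ℝ) : ℝ := ∫ t, (1 - x * t ^ 2)⁻¹ ∂μ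

theorem sqResolvent_nonneg (μ : Measure ℝ) {x : ℝ} (hx : x ≤ 0) : 0 ≤ sqResolvent μ x :=
  integral_nonneg fun t => inv_nonneg.2 (by nlinarith [sq_nonneg t])

theorem tendsto_sqResolvent_atBot (μ : Measure ℝ) [IsFiniteMeasure μ] :
    Tendsto (sqResolvent μ) atBot (𝓝 (μ {0}).toReal) := by
  rw [← measureReal_def, ← integral_indicator_one (measurableSet_singleton 0)]
  refine tendsto_integral_filter_of_dominated_convergence 1
    (.of_forall fun x => (measurable_inv_one_sub_mul_sq x).aestronglyMeasurable) ?_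
    (integrable_const 1) (ae_of_all _ fun t => ?_)
  · filter_upwards [eventually_le_atBot 0] with x hx
    exact ae_of_all _ (norm_inv_one_sub_mul_sq_le_one hx)
  · rcases eq_or_ne t 0 with rfl | ht
    · simp
    · rw [indicator_of_notMem (by simpa using ht)]
      refine Tendsto.inv_tendsto_atTop ?_
      have ht2 : 0 < t ^ 2 := by positivity
      simpa [sub_eq_add_neg, neg_mul] using
        tendsto_atTop_add_const_left _ 1 (tendsto_neg_atBot_atTop.atTop_mul_const ht2)

/-- `s / (1 + s t²)`, written so that it is visibly monotone in `s` with limit `t⁻²`, also at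
`t = 0`. -/
def invSqApprox (μ : Measure ℝ) (s : ℝ) : ℝ≥0∞ :=
  ∫⁻ t, ((ENNReal.ofReal s)⁻¹ + ENNReal.ofReal (t ^ 2))⁻¹ ∂μ

theorem tendsto_invSqApprox_atTop (μ : Measure ℝ) :
    Tendsto (invSqApprox μ) atTop (𝓝 (invSqInt μ)) := by
  have h_lim : Tendsto (fun s : ℝ => (ENNReal.ofReal s)⁻¹) atTop (𝓝 0) :=
    ENNReal.inv_top ▸ tendsto_inv_iff.2 ENNReal.tendsto_ofReal_atTop
  refine tendsto_lintegral_of_monotone_of_tendsto (fun s => by fun_prop)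
    (ae_of_all _ fun t s s' hss' => ?_) (ae_of_all _ fun t => ?_)
  · exact ENNReal.inv_le_inv.2
      (add_le_add_left (ENNReal.inv_le_inv.2 (ENNReal.ofReal_le_ofReal hss')) _)
  · simpa using (h_lim.add_const _).inv

theorem ofReal_neg_mul_sqResolvent (μ : Measure ℝ) [IsFiniteMeasure μ] {x : ℝ} (hx : x < 0) :
    ENNReal.ofReal (-(x * sqResolvent μ x)) = invSqApprox μ (-x) := by
  have h_pt (t : ℝ) : ENNReal.ofReal (-x * (1 - x * t ^ 2)⁻¹)
      = ((ENNReal.ofReal (-x))⁻¹ + ENNReal.ofReal (t ^ 2))⁻¹ := by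
    have hx' : 0 < -x := neg_pos.2 hx
    rw [← ENNReal.ofReal_inv_of_pos hx', ← ENNReal.ofReal_add (by positivity) (by positivity),
      ← ENNReal.ofReal_inv_of_pos (by positivity)]
    have hx0 : x ≠ 0 := hx.ne
    have h_sum : (-x)⁻¹ + t ^ 2 = (1 - x * t ^ 2) / -x := by field_simp; ring
    rw [h_sum, inv_div, div_eq_mul_inv]
  rw [sqResolvent, ← neg_mul, ← integral_const_mul,
    ofReal_integral_eq_lintegral_ofReal ((integrable_inv_one_sub_mul_sq μ hx.le).const_mul _)
      (ae_of_all _ fun t => mul_nonneg (neg_nonneg.2 hx.le)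
        (inv_nonneg.2 (by nlinarith [sq_nonneg t])))]
  simp only [h_pt, invSqApprox]

theorem tendsto_ofReal_neg_mul_sqResolvent_atBot (μ : Measure ℝ) [IsFiniteMeasure μ] :
    Tendsto (fun x => ENNReal.ofReal (-(x * sqResolvent μ x))) atBot (𝓝 (invSqInt μ)) := by
  refine ((tendsto_invSqApprox_atTop μ).comp tendsto_neg_atBot_atTop).congr' ?_
  filter_upwards [eventually_lt_atBot 0] with x hx
  exact (ofReal_neg_mul_sqResolvent μ hx).symm

theorem tendsto_mul_sqResolvent_of_ne_top (μ : Measure ℝ) [IsFiniteMeasure μ]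
    (h : invSqInt μ ≠ ∞) :
    Tendsto (fun x => x * sqResolvent μ x) atBot (𝓝 (-(invSqInt μ).toReal)) := by
  refine ((ENNReal.tendsto_toReal h).comp
    (tendsto_ofReal_neg_mul_sqResolvent_atBot μ)).neg.congr' ?_
  filter_upwards [eventually_le_atBot 0] with x hx
  have h_nonneg := neg_nonneg.2 (mul_nonpos_of_nonpos_of_nonneg hx (sqResolvent_nonneg μ hx))
  simp [ENNReal.toReal_ofReal h_nonneg]

theorem tendsto_mul_sqResolvent_of_eq_top (μ : Measure ℝ) [IsFiniteMeasure μ]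
    (h : invSqInt μ = ∞) :
    Tendsto (fun x => x * sqResolvent μ x) atBot atBot := by
  have h_lim := tendsto_ofReal_neg_mul_sqResolvent_atBot μ
  rw [h, ENNReal.tendsto_ofReal_nhds_top] at h_lim
  exact tendsto_neg_atTop_iff.1 h_lim

theorem invSqInt_pos (μ : Measure ℝ) [NeZero μ] : 0 < invSqInt μ := by
  rw [invSqInt, lintegral_pos_iff_support (by fun_prop)]
  simp [Function.support, NeZero.ne μ]

theorem invSqInt_eq_top_of_pos (μ : Measure ℝ) (h : 0 < μ {0}) : invSqInt μ = ∞ := by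
  refine top_le_iff.1 (le_trans ?_ (setLIntegral_le_lintegral {0} _))
  simp [ENNReal.mul_top h.ne']

section Ht

variable (l : ℝ) (μ : Measure ℝ) [IsProbabilityMeasure μ]

theorem Mt_ofReal {x : ℝ} (hx : x ≤ 0) : Mt μ x = sqResolvent μ x - 1 := by
  have h_int : Integrable (fun t : ℝ => (((1 - x * t ^ 2)⁻¹ : ℝ) : ℂ)) μ :=
    (integrable_inv_one_sub_mul_sq μ hx).ofReal
  have h_pt (t : ℝ) : (x : ℂ) * (t : ℂ) ^ 2 / (1 - x * (t : ℂ) ^ 2)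
      = (((1 - x * t ^ 2)⁻¹ : ℝ) : ℂ) - 1 := by
    have : (1 : ℂ) - x * (t : ℂ) ^ 2 ≠ 0 := by
      norm_cast; nlinarith [sq_nonneg t]
    push_cast
    field_simp
    ring
  simp only [Mt, h_pt, integral_sub h_int (integrable_const 1), integral_const, probReal_univ,
    one_smul, sqResolvent, integral_complex_ofReal]

theorem Ht_ofReal {x : ℝ} (hx : x ≤ 0) :
    Ht l μ x = ((x * sqResolvent μ x * (1 + l * (sqResolvent μ x - 1)) : ℝ) : ℂ) := by
  rw [Ht, Mt_ofReal μ hx]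
  push_cast
  ring

theorem eventually_Ht_eq_ofReal :
    ∀ᶠ x : ℝ in atBot,
      Ht l μ x = ((x * sqResolvent μ x * (1 + l * (sqResolvent μ x - 1)) : ℝ) : ℂ) :=
  (eventually_le_atBot 0).mono fun _ hx => Ht_ofReal l μ hx

theorem tendsto_one_add_mul_sqResolvent_sub_one :
    Tendsto (fun x => 1 + l * (sqResolvent μ x - 1)) atBot
      (𝓝 (1 + l * ((μ {0}).toReal - 1))) :=
  (((tendsto_sqResolvent_atBot μ).sub_const 1).const_mul l).const_add 1

theorem tendsto_Ht_atBot_of_ne_top (h : invSqInt μ ≠ ∞) :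
    Tendsto (fun x : ℝ => Ht l μ x) atBot (𝓝 (-(1 - l) * (invSqInt μ).toReal)) := by
  have h0 : μ {0} = 0 := by
    by_contra h0
    exact h (invSqInt_eq_top_of_pos μ (pos_iff_ne_zero.2 h0))
  have h_real := (tendsto_mul_sqResolvent_of_ne_top μ h).mul
    (tendsto_one_add_mul_sqResolvent_sub_one l μ)
  convert ((continuous_ofReal.tendsto _).comp h_real).congr'
    ((eventually_Ht_eq_ofReal l μ).mono fun x hx => hx.symm) using 2
  simp only [h0, ENNReal.toReal_zero]
  push_cast
  ring

theorem tendsto_re_Ht_atBot_of_eq_top (hl : l < 1) (h : invSqInt μ = ∞) :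
    Tendsto (fun x : ℝ => (Ht l μ x).re) atBot atBot := by
  have h_pos : 0 < 1 + l * ((μ {0}).toReal - 1) := by
    have ha0 : 0 ≤ (μ {0}).toReal := ENNReal.toReal_nonneg
    have ha1 : (μ {0}).toReal ≤ 1 := measureReal_le_one
    rcases le_or_gt 0 l with hl0 | hl0 <;> nlinarith
  refine ((tendsto_mul_sqResolvent_of_eq_top μ h).atBot_mul_pos h_pos
    (tendsto_one_add_mul_sqResolvent_sub_one l μ)).congr' ?_
  filter_upwards [eventually_Ht_eq_ofReal l μ] with x hx
  rw [hx, ofReal_re]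

theorem eventually_im_Ht_eq_zero : ∀ᶠ x : ℝ in atBot, (Ht l μ x).im = 0 := by
  filter_upwards [eventually_Ht_eq_ofReal l μ] with x hx
  rw [hx, ofReal_im]

theorem tendsto_Ht_div_atBot :
    Tendsto (fun x : ℝ => Ht l μ x / x) atBot
      (𝓝 ((l * (μ {0}).toReal ^ 2 + (1 - l) * (μ {0}).toReal : ℝ) : ℂ)) := by
  have h_real := (tendsto_sqResolvent_atBot μ).mul (tendsto_one_add_mul_sqResolvent_sub_one l μ)
  convert ((continuous_ofReal.tendsto _).comp h_real).congr' ?_ using 2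
  · push_cast
    ring
  · filter_upwards [eventually_Ht_eq_ofReal l μ, eventually_lt_atBot 0] with x hx hx0
    have hx0' : (x : ℂ) ≠ 0 := ofReal_ne_zero.2 hx0.ne
    rw [hx, Function.comp_apply]
    push_cast
    field_simp

end Ht

theorem stmt4_general (l : ℝ) (hl : l ∈ Set.Ioo (0 : ℝ) 1) (μ : Measure ℝ) [IsProbabilityMeasure μ] :
    0 < invSqInt μ ∧
    (invSqInt μ ≠ ⊤ →
      Tendsto (fun x : ℝ => Ht l μ (x : ℂ)) atBot
        (nhds (-((1 : ℂ) - (l : ℂ)) * ((invSqInt μ).toReal : ℂ)))) ∧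
    (invSqInt μ = ⊤ →
      (Tendsto (fun x : ℝ => (Ht l μ (x : ℂ)).re) atBot atBot ∧
        ∀ᶠ x : ℝ in atBot, (Ht l μ (x : ℂ)).im = 0)) ∧
    (0 < μ ({0} : Set ℝ) → invSqInt μ = ⊤) ∧
    Tendsto (fun x : ℝ => Ht l μ (x : ℂ) / (x : ℂ)) atBot
      (nhds (((l * (μ ({0} : Set ℝ)).toReal ^ 2
        + (1 - l) * (μ ({0} : Set ℝ)).toReal : ℝ) : ℂ))) :=
  ⟨invSqInt_pos μ, tendsto_Ht_atBot_of_ne_top l μ,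
    fun h => ⟨tendsto_re_Ht_atBot_of_eq_top l μ hl.2 h, eventually_im_Ht_eq_zero l μ⟩,
    invSqInt_eq_top_of_pos μ, tendsto_Ht_div_atBot l μ⟩

/-- For `λ ∈ (0,1)` and a symmetric probability measure `μ` on `ℝ`,
`H_μ(x) → -(1-λ)·∫ t⁻² dμ(t) ∈ [-∞,0)` as `x → -∞` (the limit being `-∞` when
`∫ t⁻² dμ(t) = +∞`, in particular when `μ({0}) > 0`), and
`H_μ(x)/x → λ·μ({0})² + (1-λ)·μ({0})`. -/
theorem stmt4 (l : ℝ) (hl : l ∈ Set.Ioo (0 : ℝ) 1) (μ : Measure ℝ) [IsProbabilityMeasure μ]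
    (hsym : Measure.map (fun t : ℝ => -t) μ = μ) :
    0 < invSqInt μ ∧
    (invSqInt μ ≠ ⊤ →
      Tendsto (fun x : ℝ => Ht l μ (x : ℂ)) atBot
        (nhds (-((1 : ℂ) - (l : ℂ)) * ((invSqInt μ).toReal : ℂ)))) ∧
    (invSqInt μ = ⊤ →
      (Tendsto (fun x : ℝ => (Ht l μ (x : ℂ)).re) atBot atBot ∧
        ∀ᶠ x : ℝ in atBot, (Ht l μ (x : ℂ)).im = 0)) ∧
    (0 < μ ({0} : Set ℝ) → invSqInt μ = ⊤) ∧
    Tendsto (fun x : ℝ => Ht l μ (x : ℂ) / (x : ℂ)) atBot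
      (nhds (((l * (μ ({0} : Set ℝ)).toReal ^ 2
        + (1 - l) * (μ ({0} : Set ℝ)).toReal : ℝ) : ℂ))) :=
  stmt4_general l hl μ

end
end

section
/- Let φ(z) = ∫ 1/(z−t) dσ(t) be the Cauchy transform of a nonzero positive finite Borel measure σ on ℝ, and let ν be a Borel probability measure on ℝ with Nevanlinna representation F_ν(z) = a + z + ∫ (1 + t·z)/(t − z) dρ(t) for z ∈ ℂ⁺, where a ∈ ℝ and ρ is a positive finite Borel measure on ℝ. If ρ({0}) ≥ σ(ℝ), then lim_{y→+∞} F_ν(−φ(iy))/(iy) = ρ({0})/σ(ℝ) ≥ 1; in particular, the analytic self-map g of ℂ⁺ defined by g(z) = F_ν(−φ(z)) has ∞ as its Denjoy–Wolff point. -/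
open MeasureTheory Complex Set Filter Topology

noncomputable section

/-- The upper half-plane. -/
def UHP : Set ℂ := {z : ℂ | 0 < z.im}

/-- The Cauchy transform of a measure on `ℝ`. -/
def cauchyG (ν : Measure ℝ) (z : ℂ) : ℂ := ∫ t : ℝ, (z - (t : ℂ))⁻¹ ∂ν

/-- The reciprocal Cauchy transform. -/
def cauchyF (ν : Measure ℝ) (z : ℂ) : ℂ := (cauchyG ν z)⁻¹

/-!
Write `w = -G_σ(z)` and `q_σ(z) = ∫ dσ(t) / |z - t|²`, so that `Im w = Im z · q_σ(z)`.
The Nevanlinna representation reads `F_ν(w) = a + (1 + ρ(ℝ)) w - (1 + w²) G_ρ(w)`.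

On the imaginary axis `iy · G_σ(iy) → σ(ℝ)`, so `w → 0` while `iy · w → -σ(ℝ)`; by dominated
convergence `G_ρ(w) / iy = ∫ dρ(t) / (iy (w - t)) → -ρ({0}) / σ(ℝ)`, since only the atom
at `0` sees `w`. This gives the limit `ρ({0}) / σ(ℝ)`.

For `g(z) = F_ν(-G_σ(z))`, the atom of `ρ` at `0` contributes `ρ({0}) Im F_σ(z)` to `Im g(z)`,
and Cauchy–Schwarz (`|G_σ|² ≤ σ(ℝ) q_σ`) gives `σ(ℝ) Im F_σ(z) ≥ Im z`. With `ρ({0}) ≥ σ(ℝ)`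
this yields `Im g(z) ≥ Im z (1 + q_σ(z))`. Along an orbit `Im` is nondecreasing; if it stays
bounded, its increments tend to `0`, forcing `q_σ(zₙ) → 0`, i.e. `|zₙ| → ∞`. Uniformity on compact
sets comes from the family `(gⁿ + i)⁻¹`, which is bounded by `1` on `ℂ⁺`, hence equicontinuous
by the Schwarz lemma.
-/

theorem sq_integral_le_measureReal_univ_mul {α : Type*} [MeasurableSpace α] {μ : Measure α}
    [IsFiniteMeasure μ] {h : α → ℝ} (hh : Integrable h μ)
    (hh2 : Integrable (fun x => h x ^ 2) μ) :
    (∫ x, h x ∂μ) ^ 2 ≤ μ.real univ * ∫ x, h x ^ 2 ∂μ := by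
  set S := μ.real univ
  set A := ∫ x, h x ∂μ
  set E := ∫ x, h x ^ 2 ∂μ
  have hexpand : ∫ x, (S * h x - A) ^ 2 ∂μ = S * (S * E - A ^ 2) := by
    have hpoly : ∀ x, (S * h x - A) ^ 2 = S ^ 2 * h x ^ 2 - 2 * S * A * h x + A ^ 2 :=
      fun x => by ring
    simp only [hpoly]
    rw [integral_add _ (integrable_const _), integral_sub (hh2.const_mul _) (hh.const_mul _),
      integral_const_mul, integral_const_mul, integral_const, smul_eq_mul]
    · ring
    · exact (hh2.const_mul _).sub (hh.const_mul _)
  have hsq : 0 ≤ S * (S * E - A ^ 2) :=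
    hexpand ▸ integral_nonneg fun x => sq_nonneg (S * h x - A)
  rcases measureReal_nonneg.eq_or_lt with hS | hS
  · have hμ : μ = 0 := by
      rwa [eq_comm, measureReal_eq_zero_iff (measure_ne_top μ univ),
        Measure.measure_univ_eq_zero] at hS
    simp [A, S, hμ]
  · nlinarith

theorem im_integral {α : Type*} [MeasurableSpace α] {μ : Measure α} {f : α → ℂ}
    (hf : Integrable f μ) : (∫ x, f x ∂μ).im = ∫ x, (f x).im ∂μ :=
  (integral_im hf).symm

theorem EquicontinuousOn.tendstoUniformlyOn_of_tendsto {ι X α : Type*} [TopologicalSpace X]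
    [UniformSpace α] {F : ι → X → α} {f : X → α} {K : Set X} {p : Filter ι}
    (hK : IsCompact K) (hF : EquicontinuousOn F K)
    (h : ∀ x ∈ K, Tendsto (F · x) p (𝓝 (f x))) : TendstoUniformlyOn F f p K := by
  refine UniformOnFun.tendsto_iff_tendstoUniformlyOn.mp
    ((EquicontinuousOn.tendsto_uniformOnFun_iff_pi' (𝔖 := {K}) (by simpa using hK)
      (by simpa using hF) p f).mpr ?_) K rfl
  rw [tendsto_pi_nhds]
  rintro ⟨x, hx⟩
  exact h x (by simpa using hx)

theorem equicontinuousAt_of_differentiableOn_of_norm_le {ι : Type*} {F : ι → ℂ → ℂ}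
    {U : Set ℂ} {z : ℂ} {B : ℝ} (hU : U ∈ 𝓝 z) (hd : ∀ i, DifferentiableOn ℂ (F i) U)
    (hB : ∀ i, ∀ w ∈ U, ‖F i w‖ ≤ B) : EquicontinuousAt F z := by
  obtain ⟨r, hr, hrU⟩ := Metric.mem_nhds_iff.mp hU
  refine Metric.equicontinuousAt_of_continuity_modulus (fun w => 2 * B / r * dist w z) ?_ F ?_
  · simpa using ((continuous_id.dist (continuous_const (y := z))).tendsto z).const_mul (2 * B / r)
  · filter_upwards [Metric.ball_mem_nhds z hr] with w hw i
    rw [dist_comm]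
    refine Complex.dist_le_div_mul_dist_of_mapsTo_ball ((hd i).mono hrU) (fun v hv => ?_) hw
    rw [Metric.mem_closedBall, dist_eq_norm]
    calc ‖F i v - F i z‖ ≤ ‖F i v‖ + ‖F i z‖ := norm_sub_le _ _
      _ ≤ 2 * B := by linarith [hB i v (hrU hv), hB i z (hrU (Metric.mem_ball_self hr))]

def invNormSqIntegral (μ : Measure ℝ) (z : ℂ) : ℝ := ∫ t : ℝ, (normSq (z - t))⁻¹ ∂μ

section CauchyTransform

variable {μ : Measure ℝ} [IsFiniteMeasure μ] {z : ℂ}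

theorem abs_im_le_norm_sub_ofReal (z : ℂ) (t : ℝ) : |z.im| ≤ ‖z - t‖ := by
  simpa using abs_im_le_norm (z - t)

theorem sub_ofReal_ne_zero (hz : 0 < z.im) (t : ℝ) : z - t ≠ 0 := by
  intro h
  simpa [h, hz.ne'] using abs_im_le_norm_sub_ofReal z t

theorem norm_inv_sub_ofReal_le (hz : 0 < z.im) (t : ℝ) : ‖(z - t)⁻¹‖ ≤ z.im⁻¹ := by
  rw [norm_inv]
  exact inv_anti₀ hz ((le_abs_self _).trans (abs_im_le_norm_sub_ofReal z t))

theorem continuous_inv_sub_ofReal (hz : 0 < z.im) : Continuous fun t : ℝ => (z - t)⁻¹ :=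
  (continuous_const.sub continuous_ofReal).inv₀ (sub_ofReal_ne_zero hz)

theorem integrable_inv_sub_ofReal (hz : 0 < z.im) :
    Integrable (fun t : ℝ => (z - t)⁻¹) μ :=
  .of_bound (continuous_inv_sub_ofReal hz).aestronglyMeasurable _
    (.of_forall (norm_inv_sub_ofReal_le hz))

theorem inv_normSq_sub_ofReal_eq_norm_inv_sq (t : ℝ) : (normSq (z - t))⁻¹ = ‖(z - t)⁻¹‖ ^ 2 := by
  rw [norm_inv, inv_pow, normSq_eq_norm_sq]

theorem integrable_inv_normSq_sub_ofReal (hz : 0 < z.im) :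
    Integrable (fun t : ℝ => (normSq (z - t))⁻¹) μ := by
  simp only [inv_normSq_sub_ofReal_eq_norm_inv_sq]
  exact .of_bound ((continuous_inv_sub_ofReal hz).norm.pow 2).aestronglyMeasurable (z.im⁻¹ ^ 2)
    (.of_forall fun t => by
      rw [norm_pow, norm_norm]
      exact pow_le_pow_left₀ (norm_nonneg _) (norm_inv_sub_ofReal_le hz t) 2)

theorem invNormSqIntegral_pos (hμ : μ ≠ 0) (hz : 0 < z.im) :
    0 < invNormSqIntegral μ z := by
  refine (integral_pos_iff_support_of_nonneg (fun t => inv_nonneg.mpr (normSq_nonneg _))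
    (integrable_inv_normSq_sub_ofReal hz)).mpr ?_
  have hsupp : Function.support (fun t : ℝ => (normSq (z - t))⁻¹) = univ :=
    eq_univ_of_forall fun t => inv_ne_zero (normSq_pos.mpr (sub_ofReal_ne_zero hz t)).ne'
  rwa [hsupp, pos_iff_ne_zero, Measure.measure_univ_ne_zero]

theorem exists_pos_le_invNormSqIntegral (hμ : μ ≠ 0) (M : ℝ) :
    ∃ δ > 0, ∀ z : ℂ, 0 < z.im → ‖z‖ ≤ M → δ ≤ invNormSqIntegral μ z := by
  obtain ⟨n, hn⟩ := exists_pos_ball (0 : ℝ) hμ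
  refine ⟨μ.real (Metric.ball 0 n) * ((M + n) ^ 2 + 1)⁻¹,
    mul_pos (ENNReal.toReal_pos hn.ne' (measure_ne_top _ _)) (by positivity), fun z hz hzM => ?_⟩
  have hball : ∀ t ∈ Metric.ball (0 : ℝ) n, ((M + n) ^ 2 + 1)⁻¹ ≤ (normSq (z - t))⁻¹ := by
    intro t ht
    rw [mem_ball_zero_iff] at ht
    have hdist : ‖z - t‖ ≤ M + n :=
      (norm_sub_le _ _).trans (by simpa using add_le_add hzM ht.le)
    refine inv_anti₀ (normSq_pos.mpr (sub_ofReal_ne_zero hz t)) ?_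
    rw [normSq_eq_norm_sq]
    nlinarith [pow_le_pow_left₀ (norm_nonneg _) hdist 2]
  calc μ.real (Metric.ball 0 n) * ((M + n) ^ 2 + 1)⁻¹
      ≤ ∫ t in Metric.ball 0 n, (normSq (z - t))⁻¹ ∂μ :=
        setIntegral_ge_of_const_le measurableSet_ball (measure_ne_top _ _) hball
          (integrable_inv_normSq_sub_ofReal hz).integrableOn
    _ ≤ invNormSqIntegral μ z :=
        setIntegral_le_integral (integrable_inv_normSq_sub_ofReal hz)
          (.of_forall fun t => inv_nonneg.mpr (normSq_nonneg _))

theorem im_cauchyG (hz : 0 < z.im) :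
    (cauchyG μ z).im = -(z.im * invNormSqIntegral μ z) := by
  rw [cauchyG, im_integral (integrable_inv_sub_ofReal hz), invNormSqIntegral,
    ← integral_const_mul, ← integral_neg]
  congr 1 with t
  simp [inv_im, div_eq_mul_inv]

theorem cauchyG_ne_zero (hμ : μ ≠ 0) (hz : 0 < z.im) : cauchyG μ z ≠ 0 := by
  intro h
  have := im_cauchyG (μ := μ) hz
  rw [h, zero_im] at this
  nlinarith [invNormSqIntegral_pos hμ hz]

theorem normSq_cauchyG_le (hz : 0 < z.im) :
    normSq (cauchyG μ z) ≤ μ.real univ * invNormSqIntegral μ z := by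
  have hint := (integrable_inv_sub_ofReal (μ := μ) hz).norm
  have hint2 : Integrable (fun t : ℝ => ‖(z - t)⁻¹‖ ^ 2) μ := by
    simpa only [inv_normSq_sub_ofReal_eq_norm_inv_sq] using integrable_inv_normSq_sub_ofReal hz
  calc normSq (cauchyG μ z) = ‖cauchyG μ z‖ ^ 2 := normSq_eq_norm_sq _
    _ ≤ (∫ t, ‖(z - t)⁻¹‖ ∂μ) ^ 2 :=
        pow_le_pow_left₀ (norm_nonneg _) (norm_integral_le_integral_norm _) 2
    _ ≤ μ.real univ * ∫ t, ‖(z - t)⁻¹‖ ^ 2 ∂μ := sq_integral_le_measureReal_univ_mul hint hint2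
    _ = μ.real univ * invNormSqIntegral μ z := by
        simp only [invNormSqIntegral, inv_normSq_sub_ofReal_eq_norm_inv_sq]

theorem im_le_measureReal_univ_mul_im_cauchyF (hμ : μ ≠ 0) (hz : 0 < z.im) :
    z.im ≤ μ.real univ * (cauchyF μ z).im := by
  have hq := invNormSqIntegral_pos hμ hz
  have hG := normSq_pos.mpr (cauchyG_ne_zero hμ hz)
  rw [cauchyF, inv_im, im_cauchyG hz, neg_neg, ← mul_div_assoc, le_div_iff₀ hG]
  nlinarith [normSq_cauchyG_le (μ := μ) hz]

theorem differentiableAt_cauchyG (hz : 0 < z.im) : DifferentiableAt ℂ (cauchyG μ) z := by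
  have hnhds : {w : ℂ | z.im / 2 < w.im} ∈ 𝓝 z :=
    (continuous_im.isOpen_preimage _ isOpen_Ioi).mem_nhds (by simpa using half_lt_self hz)
  have hpos : ∀ w ∈ {w : ℂ | z.im / 2 < w.im}, 0 < w.im := fun w hw =>
    (half_pos hz).trans hw
  refine (hasDerivAt_integral_of_dominated_loc_of_deriv_le (bound := fun _ => (z.im / 2)⁻¹ ^ 2)
    (F' := fun w (t : ℝ) => -((w - t) ^ 2)⁻¹) hnhds
    (eventually_of_mem hnhds fun w hw =>
      (continuous_inv_sub_ofReal (hpos w hw)).aestronglyMeasurable)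
    (integrable_inv_sub_ofReal hz) (by fun_prop) ?_ (integrable_const _) ?_).2.differentiableAt
  · refine .of_forall fun t w hw => ?_
    rw [norm_neg, norm_inv, norm_pow, ← inv_pow, ← norm_inv]
    exact pow_le_pow_left₀ (norm_nonneg _)
      ((norm_inv_sub_ofReal_le (hpos w hw) t).trans (inv_anti₀ (half_pos hz) (le_of_lt hw))) 2
  · refine .of_forall fun t w hw => ?_
    exact (((hasDerivAt_id w).sub_const (t : ℂ)).inv
      (sub_ofReal_ne_zero (hpos w hw) t)).congr_deriv (by simp [div_eq_mul_inv])

theorem tendsto_ofReal_mul_I_cobounded :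
    Tendsto (fun y : ℝ => (y : ℂ) * I) atTop (Bornology.cobounded ℂ) := by
  rw [← tendsto_norm_atTop_iff_cobounded]
  simpa using tendsto_abs_atTop_atTop

theorem tendsto_mul_cauchyG_ofReal_mul_I :
    Tendsto (fun y : ℝ => (y * I) * cauchyG μ (y * I)) atTop (𝓝 (μ.real univ)) := by
  have hinv := tendsto_inv₀_cobounded.comp tendsto_ofReal_mul_I_cobounded
  simp only [cauchyG, ← integral_const_mul]
  have hlim : (μ.real univ : ℂ) = ∫ _ : ℝ, (1 : ℂ) ∂μ := by simp
  rw [hlim]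
  refine tendsto_integral_filter_of_dominated_convergence (fun _ => 1)
    (.of_forall fun y => by fun_prop) ?_ (integrable_const _) (.of_forall fun t => ?_)
  · filter_upwards [eventually_gt_atTop 0] with y hy
    refine .of_forall fun t => ?_
    have := norm_inv_sub_ofReal_le (z := y * I) (by simpa using hy) t
    rw [norm_mul, norm_mul, norm_I, mul_one, Complex.norm_real, Real.norm_of_nonneg hy.le]
    calc y * ‖((y : ℂ) * I - t)⁻¹‖ ≤ y * y⁻¹ := by
          simpa using mul_le_mul_of_nonneg_left this hy.le
      _ = 1 := mul_inv_cancel₀ hy.ne'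
  · have hkey : ∀ᶠ y : ℝ in atTop,
        (1 - t * ((y : ℂ) * I)⁻¹)⁻¹ = (y : ℂ) * I * ((y : ℂ) * I - t)⁻¹ := by
      filter_upwards [eventually_gt_atTop 0] with y hy
      have hyI : (y : ℂ) * I ≠ 0 := by simp [hy.ne']
      rw [show 1 - t * ((y : ℂ) * I)⁻¹ = ((y : ℂ) * I - t) * ((y : ℂ) * I)⁻¹ by
        rw [sub_mul, mul_inv_cancel₀ hyI], mul_inv, inv_inv, mul_comm]
    refine Tendsto.congr' hkey ?_
    simpa using (tendsto_const_nhds.sub (hinv.const_mul (t : ℂ))).inv₀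
      (by simp : (1 : ℂ) - t * 0 ≠ 0)

theorem neg_cauchyG_mem_UHP (hμ : μ ≠ 0) (hz : 0 < z.im) : -cauchyG μ z ∈ UHP := by
  change 0 < (-cauchyG μ z).im
  rw [neg_im, im_cauchyG hz, neg_neg]
  exact mul_pos hz (invNormSqIntegral_pos hμ hz)

theorem differentiableAt_cauchyF (hμ : μ ≠ 0) (hz : 0 < z.im) :
    DifferentiableAt ℂ (cauchyF μ) z :=
  (differentiableAt_cauchyG hz).inv (cauchyG_ne_zero hμ hz)

end CauchyTransform

theorem differentiableOn_cauchyF_comp_neg_cauchyG {ν σ : Measure ℝ} [IsFiniteMeasure ν]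
    [IsFiniteMeasure σ] (hν : ν ≠ 0) (hσ : σ ≠ 0) :
    DifferentiableOn ℂ (fun w => cauchyF ν (-cauchyG σ w)) UHP := fun z hz =>
  (DifferentiableAt.comp (g := cauchyF ν) (f := fun w => -cauchyG σ w) z
    (differentiableAt_cauchyF hν (neg_cauchyG_mem_UHP hσ hz))
    (differentiableAt_cauchyG hz).neg).differentiableWithinAt

def HasNevanlinnaRep (F : ℂ → ℂ) (a : ℝ) (ρ : Measure ℝ) : Prop :=
  ∀ z ∈ UHP, F z = (a : ℂ) + z + ∫ t : ℝ, (1 + (t : ℂ) * z) / ((t : ℂ) - z) ∂ρ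

section Nevanlinna

variable {ρ : Measure ℝ} [IsFiniteMeasure ρ]

/-- Dominated convergence: as `z → ∞` with `z w → c`, only the atom of `ρ` at `0` survives. -/
theorem tendsto_cauchyG_div {α : Type*} {l : Filter α} [l.IsCountablyGenerated] {z w : α → ℂ}
    {c : ℂ} {m : ℝ} (hz : Tendsto z l (Bornology.cobounded ℂ))
    (hzw : Tendsto (fun x => z x * w x) l (𝓝 c)) (hc : c ≠ 0) (hm : 0 < m)
    (hw : ∀ᶠ x in l, m ≤ ‖z x‖ * (w x).im) :
    Tendsto (fun x => cauchyG ρ (w x) / z x) l (𝓝 (ρ.real {0} / c)) := by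
  have hrw : ∀ x, cauchyG ρ (w x) / z x = ∫ t : ℝ, (z x * (w x - t))⁻¹ ∂ρ := fun x => by
    rw [cauchyG, div_eq_inv_mul, ← integral_const_mul]
    simp only [mul_inv]
  have hlim : ρ.real {0} / c = ∫ t : ℝ, ({0} : Set ℝ).indicator (fun _ => c⁻¹) t ∂ρ := by
    rw [integral_indicator_const _ (measurableSet_singleton 0), real_smul, div_eq_mul_inv]
  simp only [hrw, hlim]
  refine tendsto_integral_filter_of_dominated_convergence (fun _ => m⁻¹)
    (.of_forall fun x => by fun_prop) ?_ (integrable_const _) (.of_forall fun t => ?_)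
  · filter_upwards [hw] with x hx
    refine .of_forall fun t => ?_
    rw [norm_inv, norm_mul]
    refine inv_anti₀ hm (hx.trans (mul_le_mul_of_nonneg_left ?_ (norm_nonneg _)))
    exact (le_abs_self _).trans (abs_im_le_norm_sub_ofReal _ t)
  · rcases eq_or_ne t 0 with rfl | ht
    · simpa using hzw.inv₀ hc
    · rw [indicator_of_notMem (by simpa using ht)]
      refine tendsto_inv₀_cobounded.comp (tendsto_norm_atTop_iff_cobounded.mp ?_)
      have hzt : Tendsto (fun x => ‖z x‖ * |t| + -‖z x * w x‖) l atTop :=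
        ((tendsto_norm_atTop_iff_cobounded.mpr hz).atTop_mul_const (abs_pos.mpr ht)).atTop_add
          hzw.norm.neg
      refine tendsto_atTop_mono (fun x => ?_) hzt
      have := norm_sub_norm_le (z x * t) (z x * w x)
      rw [norm_mul, norm_real, Real.norm_eq_abs, norm_sub_rev, ← mul_sub] at this
      linarith

variable {z : ℂ}

theorem nevanlinna_kernel_eq (hz : 0 < z.im) (t : ℝ) :
    (1 + (t : ℂ) * z) / ((t : ℂ) - z) = z - (1 + z ^ 2) * (z - t)⁻¹ := by
  have hne := sub_ofReal_ne_zero hz t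
  have hne' : (t : ℂ) - z ≠ 0 := by rw [← neg_sub]; exact neg_ne_zero.mpr hne
  field_simp
  ring

theorem integrable_nevanlinna_kernel (hz : 0 < z.im) :
    Integrable (fun t : ℝ => (1 + (t : ℂ) * z) / ((t : ℂ) - z)) ρ := by
  simp only [nevanlinna_kernel_eq hz]
  exact (integrable_const z).sub ((integrable_inv_sub_ofReal hz).const_mul _)

theorem im_nevanlinna_kernel_nonneg (hz : 0 ≤ z.im) (t : ℝ) :
    0 ≤ ((1 + (t : ℂ) * z) / ((t : ℂ) - z)).im := by
  have him : ((1 + (t : ℂ) * z) / ((t : ℂ) - z)).im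
      = (1 + t ^ 2) * z.im / normSq ((t : ℂ) - z) := by
    simp only [div_im, normSq_apply]
    simp
    ring
  rw [him]
  exact div_nonneg (mul_nonneg (by positivity) hz) (normSq_nonneg _)

theorem integral_nevanlinna_kernel (hz : 0 < z.im) :
    ∫ t : ℝ, (1 + (t : ℂ) * z) / ((t : ℂ) - z) ∂ρ
      = ρ.real univ * z - (1 + z ^ 2) * cauchyG ρ z := by
  simp only [nevanlinna_kernel_eq hz]
  rw [integral_sub (integrable_const z) ((integrable_inv_sub_ofReal hz).const_mul _),
    integral_const, integral_const_mul, cauchyG, Complex.real_smul]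

variable {F : ℂ → ℂ} {a : ℝ}

theorem HasNevanlinnaRep.eq_cauchyG (hF : HasNevanlinnaRep F a ρ) (hz : 0 < z.im) :
    F z = a + (1 + ρ.real univ) * z - (1 + z ^ 2) * cauchyG ρ z := by
  rw [hF z hz, integral_nevanlinna_kernel hz]
  ring

/-- The kernel equals `-1/z` at `t = 0` and has nonnegative imaginary part everywhere. -/
theorem HasNevanlinnaRep.im_add_atom_le_im (hF : HasNevanlinnaRep F a ρ) (hz : 0 < z.im) :
    z.im + ρ.real {0} * (-z⁻¹).im ≤ (F z).im := by
  have hint := integrable_nevanlinna_kernel (ρ := ρ) hz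
  have hatom : ρ.real {0} * (-z⁻¹).im
      = ∫ t in ({0} : Set ℝ), ((1 + (t : ℂ) * z) / ((t : ℂ) - z)).im ∂ρ := by
    rw [integral_singleton, smul_eq_mul]
    simp
  rw [hF z hz, add_im, add_im, ofReal_im, zero_add, im_integral hint, hatom]
  exact add_le_add_right (setIntegral_le_integral hint.im
    (.of_forall fun t => im_nevanlinna_kernel_nonneg hz.le t)) _

theorem HasNevanlinnaRep.tendsto_div {α : Type*} {l : Filter α} [l.IsCountablyGenerated]
    {z w : α → ℂ} {c : ℂ} {m : ℝ} (hF : HasNevanlinnaRep F a ρ)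
    (hz : Tendsto z l (Bornology.cobounded ℂ)) (hzw : Tendsto (fun x => z x * w x) l (𝓝 c))
    (hc : c ≠ 0) (hm : 0 < m) (hw : ∀ᶠ x in l, m ≤ ‖z x‖ * (w x).im) :
    Tendsto (fun x => F (w x) / z x) l (𝓝 (-(ρ.real {0} / c))) := by
  have hpos : ∀ᶠ x in l, z x ≠ 0 ∧ 0 < (w x).im := by
    filter_upwards [hw] with x hx
    have h := hm.trans_le hx
    have him := pos_of_mul_pos_right h (norm_nonneg _)
    exact ⟨norm_pos_iff.mp (pos_of_mul_pos_left h him.le), him⟩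
  have hzinv : Tendsto (fun x => (z x)⁻¹) l (𝓝 0) := tendsto_inv₀_cobounded.comp hz
  have hw0 : Tendsto w l (𝓝 0) := by
    have hprod : Tendsto (fun x => z x * w x * (z x)⁻¹) l (𝓝 0) := by
      simpa using hzw.mul hzinv
    refine hprod.congr' ?_
    filter_upwards [hpos] with x hx
    rw [mul_comm (z x), mul_assoc, mul_inv_cancel₀ hx.1, mul_one]
  have heq : ∀ᶠ x in l, a * (z x)⁻¹ + (1 + ρ.real univ) * (w x * (z x)⁻¹)
      - (1 + w x ^ 2) * (cauchyG ρ (w x) / z x) = F (w x) / z x := by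
    filter_upwards [hpos] with x hx
    rw [hF.eq_cauchyG hx.2]
    ring
  simpa using (((hzinv.const_mul (a : ℂ)).add ((hw0.mul hzinv).const_mul _)).sub
    (((hw0.pow 2).const_add 1).mul (tendsto_cauchyG_div hz hzw hc hm hw))).congr' heq

theorem HasNevanlinnaRep.tendsto_comp_neg_cauchyG_div (hF : HasNevanlinnaRep F a ρ)
    {σ : Measure ℝ} [IsFiniteMeasure σ] (hσ : σ ≠ 0) :
    Tendsto (fun y : ℝ => F (-cauchyG σ (y * I)) / (y * I)) atTop
      (𝓝 (ρ.real {0} / σ.real univ)) := by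
  have hS : 0 < σ.real univ := by
    have : NeZero σ := ⟨hσ⟩
    exact measureReal_univ_pos
  have hlim := tendsto_mul_cauchyG_ofReal_mul_I (μ := σ)
  have hw : ∀ᶠ y : ℝ in atTop, σ.real univ / 2 ≤ ‖(y : ℂ) * I‖ * (-cauchyG σ (y * I)).im := by
    filter_upwards [eventually_ge_atTop 0,
      ((continuous_re.tendsto _).comp hlim).eventually (eventually_ge_nhds (half_lt_self hS))]
      with y hy hre
    simpa [abs_of_nonneg hy] using hre
  simpa only [div_neg, neg_neg] using hF.tendsto_div (c := -(σ.real univ : ℂ))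
    tendsto_ofReal_mul_I_cobounded (by simpa only [mul_neg] using hlim.neg)
    (by simpa using hS.ne') (half_pos hS) hw

theorem HasNevanlinnaRep.im_mul_one_add_le_im_comp_neg_cauchyG (hF : HasNevanlinnaRep F a ρ)
    {σ : Measure ℝ} [IsFiniteMeasure σ] (hσ : σ ≠ 0) (hmass : σ.real univ ≤ ρ.real {0})
    (hz : 0 < z.im) :
    z.im * (1 + invNormSqIntegral σ z) ≤ (F (-cauchyG σ z)).im := by
  have hatom := hF.im_add_atom_le_im (neg_cauchyG_mem_UHP hσ hz)
  rw [neg_im, im_cauchyG hz, neg_neg, inv_neg, neg_neg, ← cauchyF] at hatom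
  have hFσ := im_le_measureReal_univ_mul_im_cauchyF hσ hz
  have hFσ_pos : 0 < (cauchyF σ z).im :=
    pos_of_mul_pos_right (hz.trans_le hFσ) measureReal_nonneg
  nlinarith [mul_le_mul_of_nonneg_right hmass hFσ_pos.le]

end Nevanlinna

theorem tendsto_norm_iterate_atTop {g : ℂ → ℂ} {q : ℂ → ℝ}
    (hq : ∀ M, ∃ δ > 0, ∀ z : ℂ, 0 < z.im → ‖z‖ ≤ M → δ ≤ q z)
    (hg : ∀ z : ℂ, 0 < z.im → z.im * (1 + q z) ≤ (g z).im) {z : ℂ} (hz : 0 < z.im) :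
    Tendsto (fun n => ‖g^[n] z‖) atTop atTop := by
  have hq_pos : ∀ z : ℂ, 0 < z.im → 0 < q z := fun z hz =>
    let ⟨_, hδ, hδq⟩ := hq ‖z‖
    hδ.trans_le (hδq z hz le_rfl)
  have hg_mono : ∀ z : ℂ, 0 < z.im → z.im ≤ (g z).im := fun z hz => by
    nlinarith [hg z hz, hq_pos z hz]
  have hpos : ∀ n, 0 < (g^[n] z).im := by
    intro n
    induction n with
    | zero => simpa using hz
    | succ n ih => rw [Function.iterate_succ_apply']; exact ih.trans_le (hg_mono _ ih)
  have hmono : Monotone fun n => (g^[n] z).im := monotone_nat_of_le_succ fun n => by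
    rw [Function.iterate_succ_apply']; exact hg_mono _ (hpos n)
  rcases tendsto_atTop_of_monotone hmono with htop | ⟨L, hL⟩
  · exact tendsto_atTop_mono (fun n => im_le_norm _) htop
  refine tendsto_atTop.mpr fun M => ?_
  obtain ⟨δ, hδ, hδq⟩ := hq M
  have hincr : Tendsto (fun n => (g^[n + 1] z).im - (g^[n] z).im) atTop (𝓝 0) := by
    simpa using (hL.comp (tendsto_add_atTop_nat 1)).sub hL
  filter_upwards [hincr.eventually (gt_mem_nhds (mul_pos hz hδ))] with n hn
  by_contra! hM
  have h0 : z.im ≤ (g^[n] z).im := hmono (Nat.zero_le n)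
  rw [Function.iterate_succ_apply'] at hn
  nlinarith [hg _ (hpos n), hδq _ (hpos n) hM.le]

theorem isOpen_UHP : IsOpen UHP := isOpen_lt continuous_const continuous_im

theorem one_le_norm_add_I {w : ℂ} (hw : w ∈ UHP) : 1 ≤ ‖w + I‖ :=
  calc (1 : ℝ) ≤ (w + I).im := by simpa using le_of_lt hw
    _ ≤ ‖w + I‖ := im_le_norm _

theorem eventually_forall_le_norm_iterate {g : ℂ → ℂ} (hd : DifferentiableOn ℂ g UHP)
    (hmaps : MapsTo g UHP UHP) (hesc : ∀ z ∈ UHP, Tendsto (fun n => ‖g^[n] z‖) atTop atTop)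
    {K : Set ℂ} (hKU : K ⊆ UHP) (hK : IsCompact K) (M : ℝ) :
    ∀ᶠ n in atTop, ∀ z ∈ K, M ≤ ‖g^[n] z‖ := by
  set k : ℕ → ℂ → ℂ := fun n z => (g^[n] z + I)⁻¹
  have hk_le : ∀ n, ∀ z ∈ UHP, ‖k n z‖ ≤ 1 := fun n z hz => by
    rw [norm_inv]; exact inv_le_one_of_one_le₀ (one_le_norm_add_I (hmaps.iterate n hz))
  have hk_diff : ∀ n, DifferentiableOn ℂ (k n) UHP := fun n =>
    ((hd.iterate hmaps n).add_const I).inv fun z hz =>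
      norm_pos_iff.mp (one_pos.trans_le (one_le_norm_add_I (hmaps.iterate n hz)))
  have hk_lim : ∀ z ∈ K, Tendsto (k · z) atTop (𝓝 0) := fun z hz =>
    tendsto_inv₀_cobounded.comp ((tendsto_add_const_cobounded I).comp
      (tendsto_norm_atTop_iff_cobounded.mp (hesc z (hKU hz))))
  have hk_unif : TendstoUniformlyOn k 0 atTop K :=
    EquicontinuousOn.tendstoUniformlyOn_of_tendsto hK (fun z hz =>
      (equicontinuousAt_of_differentiableOn_of_norm_le (isOpen_UHP.mem_nhds (hKU hz)) hk_diff
        hk_le).equicontinuousWithinAt K) hk_lim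
  set M' := max M 0
  filter_upwards [Metric.tendstoUniformlyOn_iff.mp hk_unif (M' + 1)⁻¹ (by positivity)]
    with n hn z hz
  have hkz : ‖k n z‖ < (M' + 1)⁻¹ := by simpa using hn z hz
  rw [norm_inv, inv_lt_inv₀ (one_pos.trans_le (one_le_norm_add_I (hmaps.iterate n (hKU hz))))
    (by positivity)] at hkz
  have := norm_add_le (g^[n] z) I
  rw [norm_I] at this
  linarith [le_max_left M 0]

/-- Let `φ` be the Cauchy transform of a nonzero positive finite measure
`σ`, and let `ν` have Nevanlinna representation `F_ν(z) = a + z + ∫ (1+tz)/(t-z) dρ(t)`.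
If `ρ({0}) ≥ σ(ℝ)`, then `F_ν(-φ(iy))/(iy) → ρ({0})/σ(ℝ) ≥ 1` as `y → +∞`; in particular
the self-map `g(z) = F_ν(-φ(z))` of `ℂ⁺` has `∞` as its Denjoy–Wolff point: its iterates
leave every bounded set, uniformly on compact subsets of `ℂ⁺`. -/
theorem stmt8 (σ : Measure ℝ) [IsFiniteMeasure σ] (hσ : σ ≠ 0)
    (ν : Measure ℝ) [IsProbabilityMeasure ν]
    (a : ℝ) (ρ : Measure ℝ) [IsFiniteMeasure ρ]
    (hrep : ∀ z ∈ UHP, cauchyF ν z =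
      (a : ℂ) + z + ∫ t : ℝ, (1 + (t : ℂ) * z) / ((t : ℂ) - z) ∂ρ)
    (hmass : σ Set.univ ≤ ρ ({0} : Set ℝ)) :
    Tendsto
      (fun y : ℝ =>
        cauchyF ν (-(∫ t : ℝ, (((y : ℂ) * Complex.I) - (t : ℂ))⁻¹ ∂σ)) /
          ((y : ℂ) * Complex.I))
      atTop (nhds (((ρ ({0} : Set ℝ)).toReal / (σ Set.univ).toReal : ℝ) : ℂ)) ∧
    (1 : ℝ) ≤ (ρ ({0} : Set ℝ)).toReal / (σ Set.univ).toReal ∧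
    (∀ K : Set ℂ, K ⊆ UHP → IsCompact K → ∀ M : ℝ,
      ∀ᶠ n : ℕ in atTop, ∀ z ∈ K,
        M ≤ ‖(fun w => cauchyF ν (-(cauchyG σ w)))^[n] z‖) := by
  have hF : HasNevanlinnaRep (cauchyF ν) a ρ := hrep
  have hmass' : σ.real univ ≤ ρ.real {0} := ENNReal.toReal_mono (measure_ne_top _ _) hmass
  have hS : 0 < σ.real univ := by
    have : NeZero σ := ⟨hσ⟩
    exact measureReal_univ_pos
  have hgrowth : ∀ z : ℂ, 0 < z.im →
      z.im * (1 + invNormSqIntegral σ z) ≤ (cauchyF ν (-cauchyG σ z)).im :=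
    fun z hz => hF.im_mul_one_add_le_im_comp_neg_cauchyG hσ hmass' hz
  have hmaps : MapsTo (fun w => cauchyF ν (-cauchyG σ w)) UHP UHP := fun z hz =>
    (mul_pos hz (add_pos one_pos (invNormSqIntegral_pos hσ hz))).trans_le (hgrowth z hz)
  have hesc : ∀ z ∈ UHP, Tendsto (fun n => ‖(fun w => cauchyF ν (-cauchyG σ w))^[n] z‖) atTop
      atTop := fun z hz =>
    tendsto_norm_iterate_atTop (exists_pos_le_invNormSqIntegral hσ) hgrowth hz
  refine ⟨?_, (one_le_div hS).mpr hmass', fun K hKU hK M =>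
    eventually_forall_le_norm_iterate (differentiableOn_cauchyF_comp_neg_cauchyG
      (IsProbabilityMeasure.ne_zero ν) hσ) hmaps hesc hKU hK M⟩
  have hlim := hF.tendsto_comp_neg_cauchyG_div hσ
  rw [measureReal_def, measureReal_def, ← ofReal_div] at hlim
  exact hlim
end
end

section
/- Let λ ∈ (0,1); let μ be a symmetric Borel probability measure on ℝ that is ⊞_λ-infinitely divisible with rectangular R-transform C, and let ν, ρ be symmetric Borel probability measures on ℝ such that ρ is the rectangular free convolution μ ⊞_λ ν. If ρ({0}) > 0, then μ({0}) + ν({0}) > 1 and ρ({0}) = μ({0}) + ν({0}) − 1. -/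
open MeasureTheory Complex Set Filter Topology

noncomputable section

/-- The nonnegative real axis, viewed as a subset of `ℂ`. -/
def posAxis : Set ℂ := {z : ℂ | z.im = 0 ∧ 0 ≤ z.re}

/-- `T(w) = (λ w + 1)(w + 1)`. -/
def Tfun (l : ℝ) (w : ℂ) : ℂ := ((l : ℂ) * w + 1) * (w + 1)

/-- The rectangular `R`-transform with Lévy measure `G`:
`C(z) = z ∫ (1+t²)/(1-z t²) dG(t)`. -/
def rectC (G : Measure ℝ) (z : ℂ) : ℂ :=
  z * ∫ t : ℝ, (1 + (t : ℂ) ^ 2) / (1 - z * (t : ℂ) ^ 2) ∂G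

/-- `μ` is `⊞_λ`-infinitely divisible with rectangular `R`-transform `C = rectC G`:
`H_μ(x) = x T(C(H_μ(x)))` for `x < 0` close to `0`. -/
def IsRectInfDiv (l : ℝ) (μ G : Measure ℝ) : Prop :=
  ∃ ε > (0 : ℝ), ∀ x ∈ Set.Ioo (-ε) (0 : ℝ),
    Ht l μ (x : ℂ) = (x : ℂ) * Tfun l (rectC G (Ht l μ (x : ℂ)))

/-- `ρ` is the rectangular free convolution `μ ⊞_λ ν`, where `μ` has rectangular
`R`-transform `rectC G`. -/
def IsRectConv (l : ℝ) (G ν ρ : Measure ℝ) : Prop :=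
  ∃ ε > (0 : ℝ), ∀ x ∈ Set.Ioo (-ε) (0 : ℝ),
    Tfun l (Mt ρ (x : ℂ) - rectC G (Ht l ρ (x : ℂ))) ≠ 0 ∧
    Ht l ρ (x : ℂ) =
      Ht l ν (Ht l ρ (x : ℂ) / Tfun l (Mt ρ (x : ℂ) - rectC G (Ht l ρ (x : ℂ))))

/-!
On the negative half-line all the transforms are real, and the two defining identities, assumed
only near `0⁻`, extend to every `x < 0` by analytic continuation in `ℂ ∖ [0, ∞)`. As `x → -∞`,
dominated convergence gives `M_μ(x) → μ({0}) - 1`, so `H_μ(x) → -∞` as soon as `μ` has an atom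
at `0`. The convolution identity reads `M_ρ(x) - C(H_ρ(x)) = M_ν(ω(x))` with
`ω(x) = H_ρ(x) / T(M_ρ(x) - C(H_ρ(x)))`. Since `C` is monotone on `(-∞, 0)` and `M_ν ≤ 0`, this
gives `C ≥ ρ({0}) - 1`; hence `M_μ = C ∘ H_μ`, `μ({0}) ≥ ρ({0}) > 0` and `C(y) → μ({0}) - 1` as
`y → -∞`. Then `ω(x) → -∞`, and letting `x → -∞` yields `ρ({0}) - μ({0}) = ν({0}) - 1`.
-/

lemma isClosed_posAxis : IsClosed posAxis :=
  (isClosed_eq Complex.continuous_im continuous_const).inter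
    (isClosed_le continuous_const Complex.continuous_re)

lemma ofReal_notMem_posAxis {x : ℝ} (hx : x < 0) : (x : ℂ) ∉ posAxis :=
  fun h => hx.not_ge (by simpa using h.2)

lemma norm_ofReal_sq (t : ℝ) : ‖(t : ℂ) ^ 2‖ = t ^ 2 := by
  rw [norm_pow, Complex.norm_real, Real.norm_eq_abs, sq_abs]

lemma norm_ofReal_sq_le (t : ℝ) : ‖(t : ℂ) ^ 2‖ ≤ 1 + t ^ 2 := by
  rw [norm_ofReal_sq]; linarith

lemma norm_one_add_ofReal_sq_le (t : ℝ) : ‖1 + (t : ℂ) ^ 2‖ ≤ 1 + t ^ 2 :=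
  (norm_add_le _ _).trans (by rw [norm_one, norm_ofReal_sq])

lemma exists_pos_mul_one_add_le_norm_one_sub {z : ℂ} (hz : z ∉ posAxis) :
    ∃ c > 0, ∀ s : ℝ, 0 ≤ s → c * (1 + s) ≤ ‖1 - z * s‖ := by
  -- `(1 - z s) / (1 + s)` runs over the segment from `1` to `-z`, which avoids `0`.
  set φ : ℝ → ℝ := fun τ => ‖(1 - τ : ℂ) - τ * z‖
  obtain ⟨τ₀, hτ₀, hmin⟩ := isCompact_Icc.exists_isMinOn (nonempty_Icc.2 zero_le_one)
    (show Continuous φ by fun_prop).continuousOn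
  refine ⟨φ τ₀, norm_pos_iff.2 fun h => hz ?_, fun s hs => ?_⟩
  · have hre := congrArg Complex.re h
    have him := congrArg Complex.im h
    simp only [sub_re, one_re, ofReal_re, mul_re, ofReal_im, zero_mul, sub_zero, zero_re, sub_im,
      one_im, sub_self, mul_im, add_zero, zero_sub, zero_im, neg_eq_zero, mul_eq_zero] at hre him
    have hτ₀0 : τ₀ ≠ 0 := by rintro rfl; norm_num at hre
    refine ⟨him.resolve_left hτ₀0, ?_⟩
    nlinarith [hτ₀.1, hτ₀.2, lt_of_le_of_ne hτ₀.1 (Ne.symm hτ₀0)]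
  · have hτ : s / (1 + s) ∈ Icc (0 : ℝ) 1 :=
      ⟨by positivity, div_le_one_of_le₀ (by linarith) (by linarith)⟩
    calc φ τ₀ * (1 + s) ≤ φ (s / (1 + s)) * (1 + s) := by gcongr; exact hmin hτ
      _ = ‖1 - z * s‖ := by
        have hs' : (1 + s : ℂ) ≠ 0 := by exact_mod_cast (by positivity : (1 + s : ℝ) ≠ 0)
        simp only [φ]
        rw [show (1 - z * s : ℂ) = ((1 - (s / (1 + s) : ℝ) : ℂ) - (s / (1 + s) : ℝ) * z) *
            ((1 + s : ℝ) : ℂ) by push_cast; field_simp; ring,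
          norm_mul, Complex.norm_real, Real.norm_of_nonneg (by positivity)]

lemma exists_pos_forall_ball_mul_le_norm_one_sub {z : ℂ} (hz : z ∉ posAxis) :
    ∃ c > 0, ∀ w ∈ Metric.ball z c, ∀ t : ℝ, c * (1 + t ^ 2) ≤ ‖1 - w * (t : ℂ) ^ 2‖ := by
  obtain ⟨c, hc, hzc⟩ := exists_pos_mul_one_add_le_norm_one_sub hz
  refine ⟨c / 2, half_pos hc, fun w hw t => ?_⟩
  rw [Metric.mem_ball, dist_eq_norm] at hw
  have hz' : c * (1 + t ^ 2) ≤ ‖1 - z * (t : ℂ) ^ 2‖ := by exact_mod_cast hzc (t ^ 2) (sq_nonneg t)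
  have hwz : ‖(w - z) * (t : ℂ) ^ 2‖ ≤ c / 2 * (1 + t ^ 2) := by
    rw [norm_mul, norm_ofReal_sq]
    nlinarith [norm_nonneg (w - z), sq_nonneg t]
  have htri := norm_sub_norm_le (1 - z * (t : ℂ) ^ 2) ((w - z) * (t : ℂ) ^ 2)
  rw [show 1 - z * (t : ℂ) ^ 2 - (w - z) * (t : ℂ) ^ 2 = 1 - w * (t : ℂ) ^ 2 by ring] at htri
  linarith

lemma differentiableAt_integral_div_one_sub_mul_sq (μ : Measure ℝ) [IsFiniteMeasure μ]
    {p : ℝ → ℂ} (hp : Continuous p) (hpb : ∀ t, ‖p t‖ ≤ 1 + t ^ 2) {z : ℂ}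
    (hz : z ∉ posAxis) :
    DifferentiableAt ℂ (fun w => ∫ t, p t / (1 - w * (t : ℂ) ^ 2) ∂μ) z := by
  obtain ⟨c, hc, hbound⟩ := exists_pos_forall_ball_mul_le_norm_one_sub hz
  have hball := Metric.ball_mem_nhds z hc
  have hpos : ∀ w ∈ Metric.ball z c, ∀ t : ℝ, 0 < ‖1 - w * (t : ℂ) ^ 2‖ :=
    fun w hw t => lt_of_lt_of_le (by positivity) (hbound w hw t)
  have hne : ∀ w ∈ Metric.ball z c, ∀ t : ℝ, 1 - w * (t : ℂ) ^ 2 ≠ 0 :=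
    fun w hw t => norm_pos_iff.1 (hpos w hw t)
  have hcont : ∀ w ∈ Metric.ball z c, Continuous fun t : ℝ => p t / (1 - w * (t : ℂ) ^ 2) :=
    fun w hw => hp.div (by fun_prop) (hne w hw)
  have hF : ∀ t, ‖p t / (1 - z * (t : ℂ) ^ 2)‖ ≤ 1 / c := fun t => by
    rw [norm_div, div_le_div_iff₀ (hpos z (Metric.mem_ball_self hc) t) hc]
    nlinarith [hbound z (Metric.mem_ball_self hc) t, hpb t]
  have hF' : ∀ w ∈ Metric.ball z c, ∀ t,
      ‖p t * (t : ℂ) ^ 2 / (1 - w * (t : ℂ) ^ 2) ^ 2‖ ≤ 1 / c ^ 2 := fun w hw t => by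
    have h1 := hbound w hw t
    have h2 := hpb t
    rw [norm_div, norm_mul, norm_ofReal_sq, norm_pow,
      div_le_div_iff₀ (pow_pos (hpos w hw t) 2) (by positivity)]
    have h3 : (c * (1 + t ^ 2)) ^ 2 ≤ ‖1 - w * (t : ℂ) ^ 2‖ ^ 2 := by gcongr
    nlinarith [norm_nonneg (p t), sq_nonneg t, mul_le_mul_of_nonneg_right h2 (sq_nonneg t)]
  refine (hasDerivAt_integral_of_dominated_loc_of_deriv_le (bound := fun _ => 1 / c ^ 2)
    (F' := fun w t => p t * (t : ℂ) ^ 2 / (1 - w * (t : ℂ) ^ 2) ^ 2) hball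
    (eventually_of_mem hball fun w hw => (hcont w hw).aestronglyMeasurable)
    ((integrable_const (1 / c)).mono' (hcont z (Metric.mem_ball_self hc)).aestronglyMeasurable
      (ae_of_all _ hF))
    ?_ (ae_of_all _ fun t w hw => hF' w hw t) (integrable_const _)
    (ae_of_all _ fun t w hw => ?_)).2.differentiableAt
  · exact (hp.mul (by fun_prop)).div (by fun_prop)
      (fun t => pow_ne_zero 2 (hne z (Metric.mem_ball_self hc) t)) |>.aestronglyMeasurable
  · have hd := (hasDerivAt_const w (p t)).fun_div
      (((hasDerivAt_id' w).mul_const ((t : ℂ) ^ 2)).const_sub 1) (hne w hw t)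
    refine hd.congr_deriv ?_
    ring

lemma analyticAt_integral_div_one_sub_mul_sq (μ : Measure ℝ) [IsFiniteMeasure μ]
    {p : ℝ → ℂ} (hp : Continuous p) (hpb : ∀ t, ‖p t‖ ≤ 1 + t ^ 2) {z : ℂ}
    (hz : z ∉ posAxis) :
    AnalyticAt ℂ (fun w => ∫ t, p t / (1 - w * (t : ℂ) ^ 2) ∂μ) z :=
  DifferentiableOn.analyticAt
    (fun _ hw => (differentiableAt_integral_div_one_sub_mul_sq μ hp hpb hw).differentiableWithinAt)
    (isClosed_posAxis.isOpen_compl.mem_nhds hz)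

lemma Mt_eq_mul_integral (μ : Measure ℝ) :
    Mt μ = fun z => z * ∫ t, (t : ℂ) ^ 2 / (1 - z * (t : ℂ) ^ 2) ∂μ := by
  ext z
  simp only [Mt, ← integral_const_mul, mul_div_assoc]

section Analytic

variable {l : ℝ} {z : ℂ}

lemma analyticAt_Mt (μ : Measure ℝ) [IsFiniteMeasure μ] (hz : z ∉ posAxis) :
    AnalyticAt ℂ (Mt μ) z := by
  rw [Mt_eq_mul_integral]
  exact analyticAt_id.mul
    (analyticAt_integral_div_one_sub_mul_sq μ (by fun_prop) norm_ofReal_sq_le hz)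

lemma analyticAt_rectC (G : Measure ℝ) [IsFiniteMeasure G] (hz : z ∉ posAxis) :
    AnalyticAt ℂ (rectC G) z :=
  analyticAt_id.mul
    (analyticAt_integral_div_one_sub_mul_sq G (by fun_prop) norm_one_add_ofReal_sq_le hz)

lemma analyticAt_Ht (μ : Measure ℝ) [IsFiniteMeasure μ] (hz : z ∉ posAxis) :
    AnalyticAt ℂ (Ht l μ) z := by
  have := analyticAt_Mt μ hz
  unfold Ht
  fun_prop

lemma analyticAt_Tfun (l : ℝ) (w : ℂ) : AnalyticAt ℂ (Tfun l) w := by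
  unfold Tfun
  fun_prop

end Analytic

lemma eqOn_Iio_of_analyticAt {f g : ℂ → ℂ} (hf : ∀ x : ℝ, x < 0 → AnalyticAt ℂ f x)
    (hg : ∀ x : ℝ, x < 0 → AnalyticAt ℂ g x) {ε : ℝ} (hε : 0 < ε)
    (hfg : ∀ x ∈ Ioo (-ε) 0, f x = g x) {x : ℝ} (hx : x < 0) : f x = g x := by
  have hx₀ : -ε / 2 ∈ Ioo (-ε) 0 := ⟨by linarith, by linarith⟩
  have hreal : ∃ᶠ y : ℝ in 𝓝[≠] (-ε / 2), f y = g y :=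
    (eventually_nhdsWithin_of_eventually_nhds (Ioo_mem_nhds hx₀.1 hx₀.2)).frequently.mono hfg
  have hofReal : Tendsto ((↑) : ℝ → ℂ) (𝓝[≠] (-ε / 2)) (𝓝[≠] ((-ε / 2 : ℝ) : ℂ)) :=
    Complex.continuous_ofReal.continuousWithinAt.tendsto_nhdsWithin
      fun y hy => Complex.ofReal_injective.ne hy
  have hS : IsPreconnected (((↑) : ℝ → ℂ) '' Iio 0) :=
    isPreconnected_Iio.image _ Complex.continuous_ofReal.continuousOn
  refine AnalyticOnNhd.eqOn_of_preconnected_of_frequently_eq ?_ ?_ hS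
    (mem_image_of_mem _ hx₀.2) (hofReal.frequently hreal) (mem_image_of_mem _ hx)
  · rintro - ⟨y, hy, rfl⟩; exact hf y hy
  · rintro - ⟨y, hy, rfl⟩; exact hg y hy

section RealAxis

variable {l : ℝ}

def mReal (μ : Measure ℝ) (x : ℝ) : ℝ := ∫ t, x * t ^ 2 / (1 - x * t ^ 2) ∂μ

def tReal (l w : ℝ) : ℝ := (l * w + 1) * (w + 1)

def hReal (l : ℝ) (μ : Measure ℝ) (x : ℝ) : ℝ := x * tReal l (mReal μ x)

def cReal (G : Measure ℝ) (x : ℝ) : ℝ := x * ∫ t, (1 + t ^ 2) / (1 - x * t ^ 2) ∂G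

/-- The point `ω(x)` with `H_ρ(x) = H_ν(ω(x))` in the definition of `μ ⊞_λ ν`. -/
def subord (l : ℝ) (G ρ : Measure ℝ) (x : ℝ) : ℝ :=
  hReal l ρ x / tReal l (mReal ρ x - cReal G (hReal l ρ x))

lemma Mt_ofReal_s19 (μ : Measure ℝ) (x : ℝ) : Mt μ x = mReal μ x := by
  rw [Mt, mReal, ← integral_complex_ofReal]
  push_cast
  rfl

lemma Tfun_ofReal (l w : ℝ) : Tfun l w = tReal l w := by
  simp [Tfun, tReal]

lemma Ht_ofReal_s19 (l : ℝ) (μ : Measure ℝ) (x : ℝ) : Ht l μ x = hReal l μ x := by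
  rw [Ht, hReal, tReal, Mt_ofReal_s19]
  push_cast
  ring

lemma rectC_ofReal (G : Measure ℝ) (x : ℝ) : rectC G x = cReal G x := by
  rw [rectC, cReal, Complex.ofReal_mul, ← integral_complex_ofReal]
  push_cast
  rfl

lemma subord_ofReal (l : ℝ) (G ρ : Measure ℝ) (x : ℝ) :
    (subord l G ρ x : ℂ) = Ht l ρ x / Tfun l (Mt ρ x - rectC G (Ht l ρ x)) := by
  rw [subord, Complex.ofReal_div, Ht_ofReal_s19, Mt_ofReal_s19, rectC_ofReal, ← Complex.ofReal_sub,
    Tfun_ofReal]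

lemma mul_add_one_pos (hl0 : 0 ≤ l) (hl1 : l ≤ 1) {w : ℝ} (hw : -1 < w) : 0 < l * w + 1 := by
  rcases le_or_gt 0 w with h | h
  · nlinarith [mul_nonneg hl0 h]
  · nlinarith [mul_nonneg (sub_nonneg.2 hl1) (neg_nonneg.2 h.le)]

lemma tReal_pos (hl0 : 0 ≤ l) (hl1 : l ≤ 1) {w : ℝ} (hw : -1 < w) : 0 < tReal l w :=
  mul_pos (mul_add_one_pos hl0 hl1 hw) (by linarith)

lemma injOn_tReal (hl0 : 0 ≤ l) (hl1 : l ≤ 1) : InjOn (tReal l) (Ioi (-1)) := by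
  intro a (ha : -1 < a) b (hb : -1 < b) h
  have hfac : (a - b) * (l * (a + b + 1) + 1) = 0 := by
    simp only [tReal] at h
    linear_combination h
  have hpos : 0 < l * (a + b + 1) + 1 := mul_add_one_pos hl0 hl1 (by linarith)
  linarith [(mul_eq_zero.1 hfac).resolve_right hpos.ne']

lemma continuous_tReal (l : ℝ) : Continuous (tReal l) := by
  unfold tReal
  fun_prop

end RealAxis

section RealKernels

variable {x : ℝ} (μ : Measure ℝ)

lemma one_sub_mul_sq_pos (hx : x ≤ 0) (t : ℝ) : 0 < 1 - x * t ^ 2 := by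
  nlinarith [sq_nonneg t]

lemma abs_mul_sq_div_one_sub_le (hx : x ≤ 0) (t : ℝ) : |x * t ^ 2 / (1 - x * t ^ 2)| ≤ 1 := by
  rw [abs_div, abs_of_pos (one_sub_mul_sq_pos hx t), div_le_one (one_sub_mul_sq_pos hx t),
    abs_of_nonpos (by nlinarith [sq_nonneg t])]
  linarith

lemma integrable_mul_sq_div_one_sub [IsFiniteMeasure μ] (hx : x ≤ 0) :
    Integrable (fun t => x * t ^ 2 / (1 - x * t ^ 2)) μ :=
  (integrable_const 1).mono'
    ((by fun_prop : Continuous fun t : ℝ => x * t ^ 2).div (by fun_prop)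
      fun t => (one_sub_mul_sq_pos hx t).ne').aestronglyMeasurable
    (ae_of_all _ (abs_mul_sq_div_one_sub_le hx))

lemma integrable_one_add_sq_div_one_sub [IsFiniteMeasure μ] (hx : x < 0) :
    Integrable (fun t => (1 + t ^ 2) / (1 - x * t ^ 2)) μ := by
  refine (integrable_const (1 - x⁻¹)).mono'
    ((by fun_prop : Continuous fun t : ℝ => 1 + t ^ 2).div (by fun_prop)
      fun t => (one_sub_mul_sq_pos hx.le t).ne').aestronglyMeasurable (ae_of_all _ fun t => ?_)
  have hpos := one_sub_mul_sq_pos hx.le t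
  rw [Real.norm_of_nonneg (by positivity), div_le_iff₀ hpos]
  have : x * x⁻¹ = 1 := mul_inv_cancel₀ hx.ne
  nlinarith [sq_nonneg t, inv_lt_zero.2 hx]

lemma mReal_nonpos (hx : x ≤ 0) : mReal μ x ≤ 0 :=
  integral_nonpos fun t =>
    div_nonpos_of_nonpos_of_nonneg (by nlinarith [sq_nonneg t]) (one_sub_mul_sq_pos hx t).le

lemma neg_one_lt_mReal [IsProbabilityMeasure μ] (hx : x ≤ 0) : -1 < mReal μ x := by
  have hint := (integrable_mul_sq_div_one_sub μ hx).add (integrable_const 1)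
  have hpos : ∀ t, 0 < x * t ^ 2 / (1 - x * t ^ 2) + 1 := fun t => by
    rw [div_add_one (one_sub_mul_sq_pos hx t).ne', add_sub_cancel]
    exact div_pos one_pos (one_sub_mul_sq_pos hx t)
  have h := (integral_pos_iff_support_of_nonneg (fun t => (hpos t).le) hint).2 (by
    rw [Function.support_eq_univ fun t => (hpos t).ne']
    simp)
  rw [integral_add (integrable_mul_sq_div_one_sub μ hx) (integrable_const 1)] at h
  simp only [integral_const, probReal_univ, smul_eq_mul, mul_one] at h
  rw [mReal]
  linarith

lemma cReal_nonpos (hx : x ≤ 0) : cReal μ x ≤ 0 :=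
  mul_nonpos_of_nonpos_of_nonneg hx
    (integral_nonneg fun t => div_nonneg (by positivity) (one_sub_mul_sq_pos hx t).le)

lemma monotoneOn_cReal [IsFiniteMeasure μ] : MonotoneOn (cReal μ) (Iio 0) := by
  intro x (hx : x < 0) y (hy : y < 0) hxy
  simp only [cReal, ← integral_const_mul]
  refine integral_mono ((integrable_one_add_sq_div_one_sub μ hx).const_mul x)
    ((integrable_one_add_sq_div_one_sub μ hy).const_mul y) fun t => ?_
  simp only [mul_div_assoc']
  rw [div_le_div_iff₀ (one_sub_mul_sq_pos hx.le t) (one_sub_mul_sq_pos hy.le t)]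
  nlinarith [sq_nonneg t]

lemma tendsto_mReal_atBot [IsProbabilityMeasure μ] :
    Tendsto (mReal μ) atBot (𝓝 (μ.real {0} - 1)) := by
  have hlim : ∀ t : ℝ, Tendsto (fun x : ℝ => x * t ^ 2 / (1 - x * t ^ 2)) atBot
      (𝓝 (-({0}ᶜ : Set ℝ).indicator 1 t)) := by
    intro t
    rcases eq_or_ne t 0 with rfl | ht
    · simp
    have ht2 : t ^ 2 ≠ 0 := pow_ne_zero 2 ht
    have h : Tendsto (fun x : ℝ => t ^ 2 / (x⁻¹ - t ^ 2)) atBot (𝓝 (t ^ 2 / (0 - t ^ 2))) :=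
      tendsto_const_nhds.div (tendsto_inv_atBot_zero.sub_const (t ^ 2)) (by simpa using ht2)
    rw [zero_sub, div_neg, div_self ht2] at h
    rw [indicator_of_mem (show t ∈ ({0}ᶜ : Set ℝ) from ht), Pi.one_apply]
    refine h.congr' ((eventually_lt_atBot 0).mono fun x hx => ?_)
    have hd := (one_sub_mul_sq_pos hx.le t).ne'
    rw [show x⁻¹ - t ^ 2 = (1 - x * t ^ 2) / x by field_simp [hx.ne]]
    field_simp
  have h := tendsto_integral_filter_of_dominated_convergence (μ := μ) (fun _ => (1 : ℝ))
    ((eventually_le_atBot 0).mono fun x hx =>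
      (integrable_mul_sq_div_one_sub μ hx).aestronglyMeasurable)
    ((eventually_le_atBot 0).mono fun x hx => ae_of_all _ (abs_mul_sq_div_one_sub_le hx))
    (integrable_const 1) (ae_of_all _ hlim)
  rwa [integral_neg, integral_indicator_one (measurableSet_singleton 0).compl,
    probReal_compl_eq_one_sub (measurableSet_singleton 0), neg_sub] at h

end RealKernels

section Monotone

variable {α β γ : Type*} [LinearOrder β] [LinearOrder γ] [TopologicalSpace γ]
  [OrderTopology γ] {l : Filter α} [l.NeBot] {f : β → γ} {a : β} {g : α → β}

lemma MonotoneOn.le_of_tendsto_of_le_comp (hf : MonotoneOn f (Iio a)) (hg : Tendsto g l atBot)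
    {φ : α → γ} {L : γ} (hφ : Tendsto φ l (𝓝 L)) (hle : ∀ᶠ x in l, φ x ≤ f (g x)) {y : β}
    (hy : y < a) : L ≤ f y :=
  le_of_tendsto hφ <| (hle.and (hg.eventually (eventually_le_atBot y))).mono
    fun _ ⟨hx, hxy⟩ => hx.trans (hf (hxy.trans_lt hy) hy hxy)

lemma MonotoneOn.tendsto_atBot_of_tendsto_comp [NoMinOrder β] (hf : MonotoneOn f (Iio a))
    (hg : Tendsto g l atBot) {L : γ} (hfg : Tendsto (fun x => f (g x)) l (𝓝 L)) :
    Tendsto f atBot (𝓝 L) := by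
  refine tendsto_order.2 ⟨fun q hq => ?_, fun q hq => ?_⟩
  · filter_upwards [eventually_lt_atBot a] with y hy
    obtain ⟨x, hqx, hxy⟩ :=
      ((hfg.eventually (lt_mem_nhds hq)).and (hg.eventually (eventually_le_atBot y))).exists
    exact hqx.trans_le (hf (hxy.trans_lt hy) hy hxy)
  · obtain ⟨x, hxq, hxa⟩ :=
      ((hfg.eventually (gt_mem_nhds hq)).and (hg.eventually (eventually_lt_atBot a))).exists
    filter_upwards [eventually_le_atBot (g x)] with y hy
    exact (hf (hy.trans_lt hxa) hxa hy).trans_lt hxq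

end Monotone

section Transforms

variable {l x : ℝ} {μ G ν ρ : Measure ℝ}

lemma hReal_neg (hl0 : 0 ≤ l) (hl1 : l ≤ 1) [IsProbabilityMeasure μ] (hx : x < 0) :
    hReal l μ x < 0 :=
  mul_neg_of_neg_of_pos hx (tReal_pos hl0 hl1 (neg_one_lt_mReal μ hx.le))

lemma tendsto_hReal_atBot (hl0 : 0 ≤ l) (hl1 : l ≤ 1) [IsProbabilityMeasure μ]
    (h0 : 0 < μ.real {0}) :
    Tendsto (hReal l μ) atBot atBot :=
  tendsto_id.atBot_mul_pos (tReal_pos hl0 hl1 (by linarith))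
    ((continuous_tReal l).tendsto _ |>.comp (tendsto_mReal_atBot μ))

lemma neg_one_lt_mReal_sub_cReal (hl0 : 0 ≤ l) (hl1 : l ≤ 1) [IsFiniteMeasure G]
    [IsProbabilityMeasure ρ] (hx : x < 0) : -1 < mReal ρ x - cReal G (hReal l ρ x) := by
  linarith [neg_one_lt_mReal ρ hx.le, cReal_nonpos G (hReal_neg hl0 hl1 hx (μ := ρ)).le]

lemma subord_neg (hl0 : 0 ≤ l) (hl1 : l ≤ 1) [IsFiniteMeasure G] [IsProbabilityMeasure ρ]
    (hx : x < 0) : subord l G ρ x < 0 :=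
  div_neg_of_neg_of_pos (hReal_neg hl0 hl1 hx)
    (tReal_pos hl0 hl1 (neg_one_lt_mReal_sub_cReal hl0 hl1 hx))

lemma IsRectInfDiv.tReal_mReal_eq (hl0 : 0 ≤ l) (hl1 : l ≤ 1) [IsProbabilityMeasure μ]
    [IsFiniteMeasure G] (h : IsRectInfDiv l μ G) (hx : x < 0) :
    tReal l (mReal μ x) = tReal l (cReal G (hReal l μ x)) := by
  obtain ⟨ε, hε, heq⟩ := h
  have hH : ∀ y : ℝ, y < 0 → AnalyticAt ℂ (Ht l μ) y :=
    fun y hy => analyticAt_Ht μ (ofReal_notMem_posAxis hy)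
  have hC : ∀ y : ℝ, y < 0 → AnalyticAt ℂ (rectC G) (Ht l μ y) := fun y hy => by
    rw [Ht_ofReal_s19]
    exact analyticAt_rectC G (ofReal_notMem_posAxis (hReal_neg hl0 hl1 hy))
  have key := eqOn_Iio_of_analyticAt (g := fun z => z * Tfun l (rectC G (Ht l μ z))) hH
    (fun y hy => analyticAt_id.mul ((analyticAt_Tfun l _).comp ((hC y hy).comp (hH y hy))))
    hε heq hx
  rw [Ht_ofReal_s19, rectC_ofReal, Tfun_ofReal, ← Complex.ofReal_mul, Complex.ofReal_inj] at key
  exact mul_left_cancel₀ hx.ne key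

lemma IsRectConv.hReal_eq (hl0 : 0 ≤ l) (hl1 : l ≤ 1) [IsFiniteMeasure G]
    [IsProbabilityMeasure ν] [IsProbabilityMeasure ρ] (h : IsRectConv l G ν ρ) (hx : x < 0) :
    hReal l ρ x = hReal l ν (subord l G ρ x) := by
  obtain ⟨ε, hε, heq⟩ := h
  have hH : ∀ y : ℝ, y < 0 → AnalyticAt ℂ (Ht l ρ) y :=
    fun y hy => analyticAt_Ht ρ (ofReal_notMem_posAxis hy)
  have hsub : ∀ y : ℝ, y < 0 →
      AnalyticAt ℂ (fun z => Ht l ρ z / Tfun l (Mt ρ z - rectC G (Ht l ρ z))) y := fun y hy => by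
    have hC : AnalyticAt ℂ (rectC G) (Ht l ρ y) := by
      rw [Ht_ofReal_s19]
      exact analyticAt_rectC G (ofReal_notMem_posAxis (hReal_neg hl0 hl1 hy))
    refine (hH y hy).div ((analyticAt_Tfun l _).comp
      ((analyticAt_Mt ρ (ofReal_notMem_posAxis hy)).sub (hC.comp (hH y hy)))) ?_
    rw [Mt_ofReal_s19, Ht_ofReal_s19, rectC_ofReal, ← Complex.ofReal_sub, Tfun_ofReal,
      Complex.ofReal_ne_zero]
    exact (tReal_pos hl0 hl1 (neg_one_lt_mReal_sub_cReal hl0 hl1 hy)).ne'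
  have key := eqOn_Iio_of_analyticAt
    (g := fun z => Ht l ν (Ht l ρ z / Tfun l (Mt ρ z - rectC G (Ht l ρ z)))) hH
    (fun y hy => (analyticAt_Ht ν (ofReal_notMem_posAxis (subord_neg hl0 hl1 hy))).comp_of_eq
      (hsub y hy) (subord_ofReal l G ρ y).symm)
    hε (fun y hy => (heq y hy).2) hx
  rwa [← subord_ofReal, Ht_ofReal_s19, Ht_ofReal_s19, Complex.ofReal_inj] at key

lemma IsRectConv.mReal_sub_cReal_eq (hl0 : 0 ≤ l) (hl1 : l ≤ 1) [IsFiniteMeasure G]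
    [IsProbabilityMeasure ν] [IsProbabilityMeasure ρ] (h : IsRectConv l G ν ρ) (hx : x < 0) :
    mReal ρ x - cReal G (hReal l ρ x) = mReal ν (subord l G ρ x) := by
  have hw := neg_one_lt_mReal_sub_cReal hl0 hl1 hx (G := G) (ρ := ρ)
  have hω := subord_neg hl0 hl1 hx (G := G) (ρ := ρ)
  have hωT : subord l G ρ x * tReal l (mReal ρ x - cReal G (hReal l ρ x)) = hReal l ρ x :=
    div_mul_cancel₀ _ (tReal_pos hl0 hl1 hw).ne'
  exact injOn_tReal hl0 hl1 hw (neg_one_lt_mReal ν hω.le)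
    (mul_left_cancel₀ hω.ne (hωT.trans (h.hReal_eq hl0 hl1 hx)))

lemma IsRectConv.sub_one_le_cReal (hl0 : 0 ≤ l) (hl1 : l ≤ 1) [IsFiniteMeasure G]
    [IsProbabilityMeasure ν] [IsProbabilityMeasure ρ] (h : IsRectConv l G ν ρ)
    (hρ : 0 < ρ.real {0}) {y : ℝ} (hy : y < 0) : ρ.real {0} - 1 ≤ cReal G y :=
  (monotoneOn_cReal G).le_of_tendsto_of_le_comp (tendsto_hReal_atBot hl0 hl1 hρ)
    (tendsto_mReal_atBot ρ) ((eventually_lt_atBot 0).mono fun _ hx => by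
      linarith [h.mReal_sub_cReal_eq hl0 hl1 hx,
        mReal_nonpos ν (subord_neg hl0 hl1 hx (G := G) (ρ := ρ)).le]) hy

lemma IsRectInfDiv.mReal_eq_cReal (hl0 : 0 ≤ l) (hl1 : l ≤ 1) [IsProbabilityMeasure μ]
    [IsFiniteMeasure G] (h : IsRectInfDiv l μ G) (hC : ∀ y < 0, -1 < cReal G y) (hx : x < 0) :
    mReal μ x = cReal G (hReal l μ x) :=
  injOn_tReal hl0 hl1 (neg_one_lt_mReal μ hx.le) (hC _ (hReal_neg hl0 hl1 hx))
    (h.tReal_mReal_eq hl0 hl1 hx)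

end Transforms

theorem IsRectConv.measureReal_singleton_zero_eq {l : ℝ} (hl0 : 0 ≤ l) (hl1 : l ≤ 1)
    {μ G ν ρ : Measure ℝ} [IsProbabilityMeasure μ] [IsFiniteMeasure G] [IsProbabilityMeasure ν]
    [IsProbabilityMeasure ρ] (hconv : IsRectConv l G ν ρ) (hID : IsRectInfDiv l μ G)
    (hρ : 0 < ρ.real {0}) : ρ.real {0} = μ.real {0} + ν.real {0} - 1 := by
  have hCρ : ∀ y < 0, ρ.real {0} - 1 ≤ cReal G y := fun y hy =>
    hconv.sub_one_le_cReal hl0 hl1 hρ hy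
  have hmμ : ∀ x < 0, mReal μ x = cReal G (hReal l μ x) := fun x hx =>
    hID.mReal_eq_cReal hl0 hl1 (fun y hy => by linarith [hCρ y hy]) hx
  have hμ : ρ.real {0} ≤ μ.real {0} := by
    have := ge_of_tendsto (tendsto_mReal_atBot μ) ((eventually_lt_atBot 0).mono fun x hx =>
      (hmμ x hx).symm ▸ hCρ _ (hReal_neg hl0 hl1 hx))
    linarith
  have hC : Tendsto (cReal G) atBot (𝓝 (μ.real {0} - 1)) :=
    (monotoneOn_cReal G).tendsto_atBot_of_tendsto_comp
      (tendsto_hReal_atBot hl0 hl1 (hρ.trans_le hμ))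
      ((tendsto_mReal_atBot μ).congr' ((eventually_lt_atBot 0).mono hmμ))
  have hw : Tendsto (fun x => mReal ρ x - cReal G (hReal l ρ x)) atBot
      (𝓝 (ρ.real {0} - μ.real {0})) := by
    have h := (tendsto_mReal_atBot ρ).sub (hC.comp (tendsto_hReal_atBot hl0 hl1 hρ))
    rwa [sub_sub_sub_cancel_right] at h
  have hT := tReal_pos hl0 hl1 (by linarith [measureReal_le_one (μ := μ) (s := {0})] :
    -1 < ρ.real {0} - μ.real {0})
  have hω : Tendsto (subord l G ρ) atBot atBot := by
    refine ((tendsto_hReal_atBot hl0 hl1 hρ).atBot_mul_pos (inv_pos.2 hT)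
      (((continuous_tReal l).tendsto _).comp hw |>.inv₀ hT.ne')).congr fun x => ?_
    exact (div_eq_mul_inv _ _).symm
  have := tendsto_nhds_unique
    (hw.congr' ((eventually_lt_atBot 0).mono fun x hx => hconv.mReal_sub_cReal_eq hl0 hl1 hx))
    ((tendsto_mReal_atBot ν).comp hω)
  linarith

theorem stmt19_general (l : ℝ) (hl : l ∈ Set.Ioo (0 : ℝ) 1)
    (μ : Measure ℝ) [IsProbabilityMeasure μ]
    (G : Measure ℝ) [IsFiniteMeasure G]
    (hID : IsRectInfDiv l μ G)
    (ν ρ : Measure ℝ) [IsProbabilityMeasure ν] [IsProbabilityMeasure ρ]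
    (hconv : IsRectConv l G ν ρ)
    (hatom : 0 < ρ ({0} : Set ℝ)) :
    1 < μ ({0} : Set ℝ) + ν ({0} : Set ℝ) ∧
    ρ ({0} : Set ℝ) + 1 = μ ({0} : Set ℝ) + ν ({0} : Set ℝ) := by
  have hρ : 0 < ρ.real {0} := ENNReal.toReal_pos hatom.ne' (measure_ne_top ρ _)
  have key := hconv.measureReal_singleton_zero_eq hl.1.le hl.2.le hID hρ
  have heq : ρ {0} + 1 = μ {0} + ν {0} := by
    rw [← ENNReal.toReal_eq_toReal_iff' (by finiteness) (by finiteness),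
      ENNReal.toReal_add (by finiteness) (by finiteness),
      ENNReal.toReal_add (by finiteness) (by finiteness)]
    simp only [measureReal_def] at key
    simp only [ENNReal.toReal_one]
    linarith
  exact ⟨heq ▸ (ENNReal.lt_add_right ENNReal.one_ne_top hatom.ne').trans_eq (add_comm _ _), heq⟩

/-- If `μ` is `⊞_λ`-infinitely divisible and `ρ = μ ⊞_λ ν` has an atom
at the origin, then `μ({0}) + ν({0}) > 1` and `ρ({0}) = μ({0}) + ν({0}) - 1`. -/
theorem stmt19 (l : ℝ) (hl : l ∈ Set.Ioo (0 : ℝ) 1)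
    (μ : Measure ℝ) [IsProbabilityMeasure μ]
    (hμsym : Measure.map (fun t : ℝ => -t) μ = μ)
    (G : Measure ℝ) [IsFiniteMeasure G]
    (hGsym : Measure.map (fun t : ℝ => -t) G = G)
    (hID : IsRectInfDiv l μ G)
    (ν ρ : Measure ℝ) [IsProbabilityMeasure ν] [IsProbabilityMeasure ρ]
    (hνsym : Measure.map (fun t : ℝ => -t) ν = ν)
    (hρsym : Measure.map (fun t : ℝ => -t) ρ = ρ)
    (hconv : IsRectConv l G ν ρ)
    (hatom : 0 < ρ ({0} : Set ℝ)) :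
    1 < μ ({0} : Set ℝ) + ν ({0} : Set ℝ) ∧
    ρ ({0} : Set ℝ) + 1 = μ ({0} : Set ℝ) + ν ({0} : Set ℝ) :=
  stmt19_general l hl μ G hID ν ρ hconv hatom

end
end
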